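/- arXiv:2501.12049 — 2 statements merged into one kernel-verified Lean document; each statement's English description precedes it below -/
import Mathlib

section
/- Let L > 0 and let λ̃ ∈ ℂ be such that the polynomial μ³ + μ + λ̃ has a root of multiplicity at least two (i.e., there exists μ₀ ∈ ℂ with μ₀³ + μ₀ + λ̃ = 0 and 3μ₀² + 1 = 0). Suppose θ : ℝ → ℂ satisfies the KdV spectral ODE with parameter λ̃ on [0,L] and the boundary conditions θ(0) = 0, θ'(0) = 0, θ'(L) = 0, and θ''(L) = 0. Then θ(x) = 0 for all x ∈ [0,L]. -/
/-!
If `μ` is a double root of `z³ + z + λ`, then `3μ² = -1`, `λ = -2μ/3`, the third root is `-2μ`, and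
the solutions of `λφ + φ' + φ''' = 0` are the functions `(a + b x) e^{μx} + d e^{-2μx}`.
By uniqueness for the first-order system satisfied by `(θ, θ', θ'')`, the conditions
`θ(0) = θ'(0) = 0` make `θ` the multiple `c = θ''(0)` of one explicit solution. Its conditions at `L`
combine to `c (L - 3μ) e^{μL} = 0`, and `L ≠ 3μ` since `(3μ)² = -3`; so `c = 0` and `θ = 0`.
-/

/-- A function `φ : ℝ → ℂ` satisfies the KdV spectral ODE with parameter `lam` on `[0, L]`:
it is three times continuously differentiable and `lam·φ + φ' + φ''' = 0` on `[0, L]`. -/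
def KdVSpectralODE (lam : ℂ) (L : ℝ) (φ : ℝ → ℂ) : Prop :=
  ContDiff ℝ 3 φ ∧
    ∀ x ∈ Set.Icc (0 : ℝ) L, lam * φ x + deriv φ x + iteratedDeriv 3 φ x = 0

open Complex Set

noncomputable def twoJet (φ : ℝ → ℂ) (x : ℝ) : ℂ × ℂ × ℂ :=
  (φ x, deriv φ x, iteratedDeriv 2 φ x)

theorem hasDerivAt_twoJet {φ : ℝ → ℂ} (hφ : ContDiff ℝ 3 φ) (x : ℝ) :
    HasDerivAt (twoJet φ) (deriv φ x, iteratedDeriv 2 φ x, iteratedDeriv 3 φ x) x := by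
  have hderiv (n : ℕ) (hn : n < 3) :
      HasDerivAt (iteratedDeriv n φ) (iteratedDeriv (n + 1) φ x) x := by
    rw [iteratedDeriv_succ]
    exact (hφ.differentiable_iteratedDeriv n (by exact_mod_cast hn) x).hasDerivAt
  have h0 := hderiv 0 (by norm_num)
  have h1 := hderiv 1 (by norm_num)
  rw [iteratedDeriv_zero, zero_add, iteratedDeriv_one] at h0
  rw [iteratedDeriv_one] at h1
  exact h0.prodMk (h1.prodMk (hderiv 2 (by norm_num)))

/-- The companion matrix of `λφ + φ' + φ''' = 0`, acting on 2-jets `(φ, φ', φ'')`. -/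
noncomputable def kdvCompanion (lam : ℂ) : (ℂ × ℂ × ℂ) →L[ℂ] ℂ × ℂ × ℂ :=
  let p₁ := ContinuousLinearMap.fst ℂ ℂ (ℂ × ℂ)
  let p₂ := (ContinuousLinearMap.fst ℂ ℂ ℂ).comp (ContinuousLinearMap.snd ℂ ℂ (ℂ × ℂ))
  let p₃ := (ContinuousLinearMap.snd ℂ ℂ ℂ).comp (ContinuousLinearMap.snd ℂ ℂ (ℂ × ℂ))
  p₂.prod (p₃.prod (-(lam • p₁) - p₂))

@[simp]
theorem kdvCompanion_apply (lam : ℂ) (p : ℂ × ℂ × ℂ) :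
    kdvCompanion lam p = (p.2.1, p.2.2, -(lam * p.1) - p.2.1) := by
  simp [kdvCompanion]

namespace KdVSpectralODE

variable {lam : ℂ} {L : ℝ} {θ : ℝ → ℂ}

theorem hasDerivAt_twoJet (hode : KdVSpectralODE lam L θ) {x : ℝ} (hx : x ∈ Icc 0 L) :
    HasDerivAt (twoJet θ) (kdvCompanion lam (twoJet θ x)) x := by
  refine (_root_.hasDerivAt_twoJet hode.1 x).congr_deriv ?_
  simp only [kdvCompanion_apply, twoJet]
  congr 2
  linear_combination hode.2 x hx

theorem twoJet_eqOn (hode : KdVSpectralODE lam L θ) {g : ℝ → ℂ × ℂ × ℂ}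
    (hg : ∀ x, HasDerivAt g (kdvCompanion lam (g x)) x) (h0 : twoJet θ 0 = g 0) :
    EqOn (twoJet θ) g (Icc 0 L) :=
  ODE_solution_unique (v := fun _ ↦ kdvCompanion lam) (fun _ ↦ (kdvCompanion lam).lipschitz)
    (fun x _ ↦ (_root_.hasDerivAt_twoJet hode.1 x).continuousAt.continuousWithinAt)
    (fun _ hx ↦ (hode.hasDerivAt_twoJet (Ico_subset_Icc_self hx)).hasDerivWithinAt)
    (fun x _ ↦ (hg x).continuousAt.continuousWithinAt) (fun x _ ↦ (hg x).hasDerivWithinAt) h0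

end KdVSpectralODE

noncomputable def expPoly (μ ν a b d : ℂ) (x : ℝ) : ℂ :=
  (a + b * x) * exp (μ * x) + d * exp (ν * x)

theorem hasDerivAt_expPoly (μ ν a b d : ℂ) (x : ℝ) :
    HasDerivAt (expPoly μ ν a b d) (expPoly μ ν (b + μ * a) (μ * b) (ν * d) x) x := by
  have hx : HasDerivAt (fun x : ℝ ↦ (x : ℂ)) 1 x := ofRealCLM.hasDerivAt
  have hexp (κ : ℂ) : HasDerivAt (fun x : ℝ ↦ exp (κ * x)) (exp (κ * x) * κ) x := by
    simpa using (hx.const_mul κ).cexp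
  refine (((hx.const_mul b).const_add a).mul (hexp μ)).add ((hexp ν).const_mul d)
    |>.congr_deriv ?_
  unfold expPoly
  ring

theorem eq_neg_two_mul_div_three_of_double_root {μ lam : ℂ} (hlam : μ ^ 3 + μ + lam = 0)
    (hμ : 3 * μ ^ 2 + 1 = 0) :
    lam = -2 * μ / 3 := by
  linear_combination hlam - μ / 3 * hμ

/-- The 2-jet of `(c/3) ((1 - 3μx) e^{μx} - e^{-2μx})`, which solves the ODE with parameter
`-2μ/3` when `3μ² + 1 = 0` and has 2-jet `(0, 0, c)` at `0`. -/
noncomputable def doubleRootJet (μ c : ℂ) (x : ℝ) : ℂ × ℂ × ℂ :=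
  (expPoly μ (-2 * μ) (c / 3) (-(c * μ)) (-(c / 3)) x,
    expPoly μ (-2 * μ) (-(2 * μ * c / 3)) (c / 3) (2 * μ * c / 3) x,
    expPoly μ (-2 * μ) (5 * c / 9) (μ * c / 3) (4 * c / 9) x)

theorem doubleRootJet_zero (μ c : ℂ) : doubleRootJet μ c 0 = (0, 0, c) := by
  simp only [doubleRootJet, expPoly, ofReal_zero, mul_zero, exp_zero, Prod.mk.injEq]
  ring_nf
  simp

theorem hasDerivAt_doubleRootJet {μ : ℂ} (hμ : 3 * μ ^ 2 + 1 = 0) (c : ℂ) (x : ℝ) :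
    HasDerivAt (doubleRootJet μ c) (kdvCompanion (-2 * μ / 3) (doubleRootJet μ c x)) x := by
  refine ((hasDerivAt_expPoly _ _ _ _ _ x).prodMk ((hasDerivAt_expPoly _ _ _ _ _ x).prodMk
    (hasDerivAt_expPoly _ _ _ _ _ x))).congr_deriv ?_
  simp only [kdvCompanion_apply, doubleRootJet, expPoly, Prod.mk.injEq]
  refine ⟨?_, ?_, ?_⟩
  · linear_combination (-(c / 3) * x * exp (μ * x)) * hμ
  · linear_combination (-(2 * c / 9) * exp (μ * x) - (4 * c / 9) * exp (-2 * μ * x)) * hμ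
  · linear_combination ((c / 3) * x * exp (μ * x)) * hμ

theorem ofReal_ne_three_mul {μ : ℂ} (hμ : 3 * μ ^ 2 + 1 = 0) (L : ℝ) : (L : ℂ) ≠ 3 * μ := by
  intro h
  have : ((L ^ 2 + 3 : ℝ) : ℂ) = 0 := by
    push_cast
    linear_combination 3 * hμ + (L + 3 * μ) * h
  have : L ^ 2 + 3 = 0 := by exact_mod_cast this
  nlinarith

theorem eq_zero_of_doubleRootJet_snd_eq_zero {μ c : ℂ} (hμ : 3 * μ ^ 2 + 1 = 0) {L : ℝ}
    (h₁ : (doubleRootJet μ c L).2.1 = 0) (h₂ : (doubleRootJet μ c L).2.2 = 0) : c = 0 := by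
  simp only [doubleRootJet, expPoly] at h₁ h₂
  have hkey : c * ((L : ℂ) - 3 * μ) * exp (μ * L) = 0 := by
    linear_combination 2 * h₁ - 3 * μ * h₂ + (c * L / 3 * exp (μ * L)) * hμ
  simpa [exp_ne_zero, sub_eq_zero, ofReal_ne_three_mul hμ L] using hkey

theorem stmt12_general (L : ℝ) (lam : ℂ)
    (hroot : ∃ μ₀ : ℂ, μ₀ ^ 3 + μ₀ + lam = 0 ∧ 3 * μ₀ ^ 2 + 1 = 0)
    (θ : ℝ → ℂ) (hode : KdVSpectralODE lam L θ)
    (hb0 : θ 0 = 0) (hb1 : deriv θ 0 = 0) (hb2 : deriv θ L = 0)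
    (hb3 : iteratedDeriv 2 θ L = 0) :
    ∀ x ∈ Set.Icc (0 : ℝ) L, θ x = 0 := by
  obtain ⟨μ, hlam, hμ⟩ := hroot
  obtain rfl := eq_neg_two_mul_div_three_of_double_root hlam hμ
  set c := iteratedDeriv 2 θ 0
  have hjet : EqOn (twoJet θ) (doubleRootJet μ c) (Icc 0 L) :=
    hode.twoJet_eqOn (hasDerivAt_doubleRootJet hμ c)
      (by simp [twoJet, doubleRootJet_zero, hb0, hb1, c])
  intro x hx
  have hjetL : twoJet θ L = doubleRootJet μ c L := hjet ⟨hx.1.trans hx.2, le_rfl⟩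
  have hc : c = 0 :=
    eq_zero_of_doubleRootJet_snd_eq_zero hμ (L := L) (by simp [← hjetL, twoJet, hb2])
      (by simp [← hjetL, twoJet, hb3])
  simpa [twoJet, doubleRootJet, expPoly, hc] using congrArg Prod.fst (hjet hx)

theorem stmt12 (L : ℝ) (hL : 0 < L) (lam : ℂ)
    (hroot : ∃ μ₀ : ℂ, μ₀ ^ 3 + μ₀ + lam = 0 ∧ 3 * μ₀ ^ 2 + 1 = 0)
    (θ : ℝ → ℂ) (hode : KdVSpectralODE lam L θ)
    (hb0 : θ 0 = 0) (hb1 : deriv θ 0 = 0) (hb2 : deriv θ L = 0)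
    (hb3 : iteratedDeriv 2 θ L = 0) :
    ∀ x ∈ Set.Icc (0 : ℝ) L, θ x = 0 :=
  stmt12_general L lam hroot θ hode hb0 hb1 hb2 hb3
end

section
/- Let L > 0 and let λ̃ ∈ ℂ be such that the polynomial μ³ + μ + λ̃ has a root of multiplicity at least two (i.e., there exists μ₀ ∈ ℂ with μ₀³ + μ₀ + λ̃ = 0 and 3μ₀² + 1 = 0). Suppose θ : ℝ → ℂ satisfies the KdV spectral ODE with parameter λ̃ on [0,L] and the boundary conditions θ(0) = 0, θ'(L) = 0, θ''(0) = 0, and θ''(L) = 0. Then θ(x) = 0 for all x ∈ [0,L]. -/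
/-!
Write `a = θ'(0)`. The double root `m` gives `μ ^ 3 + μ + lam = (μ - m) ^ 2 (μ + 2 m)`, so
`g = θ' + 2 m θ` solves `(D - m) ^ 2 g = 0`; by `θ(0) = θ''(0) = 0` its initial data are `g(0) = a`,
`g'(0) = 2 m a`, whence `g = a (1 + m x) e ^ {m x}`. At `L` we get
`0 = θ''(L) + 2 m θ'(L) = g'(L) = a m (2 + m L) e ^ {m L}`, and `m (2 + m L) = 0` would force
`L ^ 2 = -12`. Hence `a = 0`, so `g = 0`, and `θ' = -2 m θ` with `θ(0) = 0` gives `θ = 0`.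
-/

open Set Complex

theorem ContDiff.hasDerivAt_iteratedDeriv {𝕜 F : Type*} [NontriviallyNormedField 𝕜]
    [NormedAddCommGroup F] [NormedSpace 𝕜 F] {f : 𝕜 → F} {n : WithTop ℕ∞} {k : ℕ}
    (h : ContDiff 𝕜 n f) (hk : k < n) (x : 𝕜) :
    HasDerivAt (iteratedDeriv k f) (iteratedDeriv (k + 1) f x) x := by
  rw [iteratedDeriv_succ]
  exact (h.differentiable_iteratedDeriv k hk x).hasDerivAt

theorem hasDerivAt_affine_mul_cexp (p q c : ℂ) (x : ℝ) :
    HasDerivAt (fun y : ℝ => (p + q * y) * exp (c * y))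
      ((q + c * p + c * q * x) * exp (c * x)) x := by
  have hid : HasDerivAt (fun y : ℝ => (y : ℂ)) 1 x := (hasDerivAt_id x).ofReal_comp
  exact (((hid.const_mul q).const_add p).mul (hid.const_mul c).cexp).congr_deriv (by ring)

section LinearODE

variable {a b : ℝ}

theorem eq_zero_of_first_order_linear_ode {f : ℝ → ℂ} {c : ℂ}
    (hf : ∀ x ∈ Icc a b, HasDerivAt f (c * f x) x) (ha : f a = 0) :
    ∀ x ∈ Icc a b, f x = 0 := fun _ hx =>
  ODE_solution_unique_of_mem_Icc_right (v := fun _ z => c * z) (s := fun _ => univ)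
    (fun _ _ => (lipschitzWith_smul c).lipschitzOnWith)
    (fun x hx => (hf x hx).continuousAt.continuousWithinAt)
    (fun x hx => (hf x (Ico_subset_Icc_self hx)).hasDerivWithinAt)
    (fun _ _ => mem_univ _)
    continuousOn_const
    (fun x _ => by simpa using hasDerivWithinAt_const x (Ici x) (0 : ℂ))
    (fun _ _ => mem_univ _)
    ha hx

theorem eq_zero_of_second_order_linear_ode {w w₁ w₂ : ℝ → ℂ} {r s : ℂ}
    (hw : ∀ x ∈ Icc a b, HasDerivAt w (w₁ x) x) (hw₁ : ∀ x ∈ Icc a b, HasDerivAt w₁ (w₂ x) x)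
    (hode : ∀ x ∈ Icc a b, w₂ x - (r + s) * w₁ x + r * s * w x = 0)
    (h₀ : w a = 0) (h₁ : w₁ a = 0) :
    (∀ x ∈ Icc a b, w x = 0) ∧ ∀ x ∈ Icc a b, w₁ x = 0 := by
  have hv : ∀ x ∈ Icc a b, w₁ x - s * w x = 0 :=
    eq_zero_of_first_order_linear_ode (c := r)
      (fun x hx => ((hw₁ x hx).sub ((hw x hx).const_mul s)).congr_deriv
        (by linear_combination hode x hx))
      (by simp [h₀, h₁])
  have hw₀ : ∀ x ∈ Icc a b, w x = 0 :=
    eq_zero_of_first_order_linear_ode (c := s)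
      (fun x hx => (hw x hx).congr_deriv (by linear_combination hv x hx)) h₀
  exact ⟨hw₀, fun x hx => by linear_combination hv x hx + s * hw₀ x hx⟩

theorem eq_of_double_root_linear_ode {g g₁ g₂ : ℝ → ℂ} {m : ℂ}
    (hg : ∀ x ∈ Icc 0 b, HasDerivAt g (g₁ x) x) (hg₁ : ∀ x ∈ Icc 0 b, HasDerivAt g₁ (g₂ x) x)
    (hode : ∀ x ∈ Icc 0 b, g₂ x - 2 * m * g₁ x + m ^ 2 * g x = 0) :
    ∀ x ∈ Icc 0 b, g x = (g 0 + (g₁ 0 - m * g 0) * x) * exp (m * x) ∧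
      g₁ x = (g₁ 0 + m * (g₁ 0 - m * g 0) * x) * exp (m * x) := by
  set p := g 0
  set q := g₁ 0 - m * p
  have hP := hasDerivAt_affine_mul_cexp p q m
  have hP₁ := hasDerivAt_affine_mul_cexp (q + m * p) (m * q) m
  obtain ⟨h₀, h₁⟩ := eq_zero_of_second_order_linear_ode (r := m) (s := m)
    (w := fun y => g y - (p + q * y) * exp (m * y))
    (w₁ := fun y => g₁ y - (q + m * p + m * q * y) * exp (m * y))
    (fun x hx => (hg x hx).sub (hP x)) (fun x hx => (hg₁ x hx).sub (hP₁ x))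
    (fun x hx => by linear_combination hode x hx) (by simp [p]) (by simp [p, q])
  intro x hx
  exact ⟨by linear_combination h₀ x hx, by linear_combination h₁ x hx⟩

end LinearODE

theorem two_mul_add_sq_mul_ofReal_ne_zero {m : ℂ} (hm : 3 * m ^ 2 + 1 = 0) (L : ℝ) :
    2 * m + m ^ 2 * L ≠ 0 := by
  intro h
  have hL : ((L ^ 2 : ℝ) : ℂ) = -12 := by
    push_cast
    linear_combination (-3 * (L + 6 * m)) * h + ((L + 6 * m) * L + 12) * hm
  have hL' : L ^ 2 = -12 := by exact_mod_cast hL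
  nlinarith [sq_nonneg L]

theorem stmt13 (L : ℝ) (hL : 0 < L) (lam : ℂ)
    (hroot : ∃ μ₀ : ℂ, μ₀ ^ 3 + μ₀ + lam = 0 ∧ 3 * μ₀ ^ 2 + 1 = 0)
    (θ : ℝ → ℂ) (hode : KdVSpectralODE lam L θ)
    (hb0 : θ 0 = 0) (hb1 : deriv θ L = 0) (hb2 : iteratedDeriv 2 θ 0 = 0)
    (hb3 : iteratedDeriv 2 θ L = 0) :
    ∀ x ∈ Set.Icc (0 : ℝ) L, θ x = 0 := by
  obtain ⟨m, hm₃, hm₂⟩ := hroot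
  obtain ⟨hθ, hode⟩ := hode
  have d₀ (x : ℝ) : HasDerivAt θ (deriv θ x) x := by
    simpa using hθ.hasDerivAt_iteratedDeriv (k := 0) (by norm_num) x
  have d₁ (x : ℝ) : HasDerivAt (deriv θ) (iteratedDeriv 2 θ x) x := by
    simpa using hθ.hasDerivAt_iteratedDeriv (k := 1) (by norm_num) x
  have d₂ (x : ℝ) : HasDerivAt (iteratedDeriv 2 θ) (iteratedDeriv 3 θ x) x :=
    hθ.hasDerivAt_iteratedDeriv (k := 2) (by norm_num) x
  have hg := eq_of_double_root_linear_ode (m := m) (g := fun x => deriv θ x + 2 * m * θ x)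
    (g₁ := fun x => iteratedDeriv 2 θ x + 2 * m * deriv θ x)
    (g₂ := fun x => iteratedDeriv 3 θ x + 2 * m * iteratedDeriv 2 θ x)
    (fun x _ => (d₁ x).add ((d₀ x).const_mul _)) (fun x _ => (d₂ x).add ((d₁ x).const_mul _))
    (fun x hx => by linear_combination hode x hx + (m * θ x - deriv θ x) * hm₂ - θ x * hm₃)
  simp only [hb0, hb2] at hg
  have ha : deriv θ 0 = 0 := by
    have hgL := (hg L ⟨hL.le, le_rfl⟩).2
    rw [hb1, hb3] at hgL
    have hfactor : deriv θ 0 * ((2 * m + m ^ 2 * L) * exp (m * L)) = 0 := by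
      linear_combination -hgL
    exact (mul_eq_zero.1 hfactor).resolve_right
      (mul_ne_zero (two_mul_add_sq_mul_ofReal_ne_zero hm₂ L) (exp_ne_zero _))
  refine eq_zero_of_first_order_linear_ode (c := -2 * m)
    (fun x hx => (d₀ x).congr_deriv ?_) hb0
  linear_combination (hg x hx).1 + (1 + m * x) * exp (m * x) * ha
end
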